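/- Let A ∈ ℝ^{r'×N} and B ∈ ℝ^{N×r} be full-rank matrices with r ≤ r' ≤ N, AA^T invertible, and σ_min(P_{A^T}(B)) > 0 where P_{A^T}(B) = A^T(AA^T)^{-1}AB. Then the condition number of AB satisfies κ(AB) ≤ κ(A) · σ_max(B) / σ_min(P_{A^T}(B)). -/

import Mathlib

open scoped BigOperators
open MeasureTheory ProbabilityTheory Matrix

noncomputable def vecEnorm {n : ℕ} (v : Fin n → ℝ) : ℝ :=
  ‖(WithLp.equiv 2 (Fin n → ℝ)).symm v‖

noncomputable def sMax {m n : ℕ} (A : Matrix (Fin m) (Fin n) ℝ) : ℝ :=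
  ⨆ x : {x : Fin n → ℝ // vecEnorm x = 1}, vecEnorm (A.mulVec x.1)

noncomputable def sMin {m n : ℕ} (A : Matrix (Fin m) (Fin n) ℝ) : ℝ :=
  ⨅ x : {x : Fin n → ℝ // vecEnorm x = 1}, vecEnorm (A.mulVec x.1)

/-!
Since `σ_max` is submultiplicative, it suffices to show `σ_min(Aᵀ) σ_min(P) ≤ σ_min(AB)` with
`P = Aᵀ(AAᵀ)⁻¹AB`. For a unit vector `x` put `w = (AAᵀ)⁻¹ABx`, so that `Aᵀw = Px` and
`AAᵀw = ABx`. Cauchy–Schwarz applied to `‖Aᵀw‖² = ⟨w, AAᵀw⟩`, together with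
`σ_min(Aᵀ)‖w‖ ≤ ‖Aᵀw‖`, gives `σ_min(Aᵀ)‖Aᵀw‖ ≤ ‖AAᵀw‖`. Finally
`σ_min(Aᵀ) ≥ 1 / σ_max((AAᵀ)⁻¹A) > 0` because `(AAᵀ)⁻¹A` is a left inverse of `Aᵀ`.
-/

section vecEnorm

variable {n : ℕ}

lemma vecEnorm_eq_norm_toLp (v : Fin n → ℝ) : vecEnorm v = ‖WithLp.toLp 2 v‖ := rfl

lemma vecEnorm_nonneg (v : Fin n → ℝ) : 0 ≤ vecEnorm v := norm_nonneg _

@[simp]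
lemma vecEnorm_eq_zero {v : Fin n → ℝ} : vecEnorm v = 0 ↔ v = 0 := by
  simp [vecEnorm_eq_norm_toLp]

@[simp]
lemma vecEnorm_zero : vecEnorm (0 : Fin n → ℝ) = 0 := vecEnorm_eq_zero.2 rfl

lemma vecEnorm_pos {v : Fin n → ℝ} (hv : v ≠ 0) : 0 < vecEnorm v :=
  (vecEnorm_nonneg v).lt_of_ne' (vecEnorm_eq_zero.not.2 hv)

lemma vecEnorm_smul (c : ℝ) (v : Fin n → ℝ) : vecEnorm (c • v) = |c| * vecEnorm v := by
  rw [vecEnorm_eq_norm_toLp, WithLp.toLp_smul, norm_smul, Real.norm_eq_abs, vecEnorm_eq_norm_toLp]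

lemma vecEnorm_inv_smul_self {v : Fin n → ℝ} (hv : v ≠ 0) :
    vecEnorm ((vecEnorm v)⁻¹ • v) = 1 := by
  rw [vecEnorm_smul, abs_of_pos (inv_pos.2 (vecEnorm_pos hv)), inv_mul_cancel₀ (vecEnorm_pos hv).ne']

lemma vecEnorm_single (i : Fin n) : vecEnorm (Pi.single i 1 : Fin n → ℝ) = 1 := by
  simp [vecEnorm_eq_norm_toLp]

lemma dotProduct_self_eq_vecEnorm_sq (v : Fin n → ℝ) : v ⬝ᵥ v = vecEnorm v ^ 2 := by
  rw [vecEnorm_eq_norm_toLp, ← real_inner_self_eq_norm_sq, EuclideanSpace.inner_eq_star_dotProduct,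
    star_trivial]

lemma dotProduct_le_vecEnorm_mul (v w : Fin n → ℝ) : v ⬝ᵥ w ≤ vecEnorm v * vecEnorm w := by
  have := real_inner_le_norm (WithLp.toLp 2 v) (WithLp.toLp 2 w)
  rwa [EuclideanSpace.inner_eq_star_dotProduct, star_trivial, dotProduct_comm] at this

lemma nonempty_unitVec_iff : Nonempty {x : Fin n → ℝ // vecEnorm x = 1} ↔ 0 < n := by
  refine ⟨fun ⟨x, hx⟩ => Nat.pos_of_ne_zero ?_, fun hn => ⟨⟨_, vecEnorm_single ⟨0, hn⟩⟩⟩⟩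
  rintro rfl
  rw [Subsingleton.elim x 0, vecEnorm_eq_zero.2 rfl] at hx
  exact zero_ne_one hx

end vecEnorm

section singularValues

variable {m n p : ℕ}

lemma bddAbove_range_vecEnorm_mulVec (M : Matrix (Fin m) (Fin n) ℝ) :
    BddAbove (Set.range fun x : {x : Fin n → ℝ // vecEnorm x = 1} => vecEnorm (M *ᵥ x.1)) := by
  let T := LinearMap.toContinuousLinearMap (toEuclideanLin M)
  refine ⟨‖T‖, ?_⟩
  rintro _ ⟨x, rfl⟩
  have hTx : vecEnorm (M *ᵥ x.1) = ‖T (WithLp.toLp 2 x.1)‖ := rfl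
  simpa [hTx, ← vecEnorm_eq_norm_toLp, x.2] using T.le_opNorm (WithLp.toLp 2 x.1)

lemma bddBelow_range_vecEnorm_mulVec (M : Matrix (Fin m) (Fin n) ℝ) :
    BddBelow (Set.range fun x : {x : Fin n → ℝ // vecEnorm x = 1} => vecEnorm (M *ᵥ x.1)) :=
  ⟨0, by rintro _ ⟨x, rfl⟩; exact vecEnorm_nonneg _⟩

lemma sMax_nonneg (M : Matrix (Fin m) (Fin n) ℝ) : 0 ≤ sMax M :=
  Real.iSup_nonneg fun _ => vecEnorm_nonneg _

lemma sMin_nonneg (M : Matrix (Fin m) (Fin n) ℝ) : 0 ≤ sMin M :=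
  Real.iInf_nonneg fun _ => vecEnorm_nonneg _

lemma vecEnorm_mulVec_le_sMax (M : Matrix (Fin m) (Fin n) ℝ) {x : Fin n → ℝ}
    (hx : vecEnorm x = 1) : vecEnorm (M *ᵥ x) ≤ sMax M :=
  le_ciSup (bddAbove_range_vecEnorm_mulVec M) ⟨x, hx⟩

lemma sMin_le_vecEnorm_mulVec (M : Matrix (Fin m) (Fin n) ℝ) {x : Fin n → ℝ}
    (hx : vecEnorm x = 1) : sMin M ≤ vecEnorm (M *ᵥ x) :=
  ciInf_le (bddBelow_range_vecEnorm_mulVec M) ⟨x, hx⟩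

lemma pos_of_sMin_pos {M : Matrix (Fin m) (Fin n) ℝ} (hM : 0 < sMin M) : 0 < n := by
  refine nonempty_unitVec_iff.1 (not_isEmpty_iff.1 fun h => hM.ne' ?_)
  exact Real.iInf_of_isEmpty _

lemma vecEnorm_mulVec_eq_mul_inv_smul (M : Matrix (Fin m) (Fin n) ℝ) {v : Fin n → ℝ} (hv : v ≠ 0) :
    vecEnorm (M *ᵥ v) = vecEnorm v * vecEnorm (M *ᵥ ((vecEnorm v)⁻¹ • v)) := by
  rw [mulVec_smul, vecEnorm_smul, abs_of_pos (inv_pos.2 (vecEnorm_pos hv)),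
    mul_inv_cancel_left₀ (vecEnorm_pos hv).ne']

lemma vecEnorm_mulVec_le_sMax_mul (M : Matrix (Fin m) (Fin n) ℝ) (v : Fin n → ℝ) :
    vecEnorm (M *ᵥ v) ≤ sMax M * vecEnorm v := by
  rcases eq_or_ne v 0 with rfl | hv
  · simp
  rw [vecEnorm_mulVec_eq_mul_inv_smul M hv, mul_comm (sMax M)]
  exact mul_le_mul_of_nonneg_left (vecEnorm_mulVec_le_sMax M (vecEnorm_inv_smul_self hv))
    (vecEnorm_nonneg v)

lemma sMin_mul_vecEnorm_le (M : Matrix (Fin m) (Fin n) ℝ) (v : Fin n → ℝ) :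
    sMin M * vecEnorm v ≤ vecEnorm (M *ᵥ v) := by
  rcases eq_or_ne v 0 with rfl | hv
  · simp
  rw [vecEnorm_mulVec_eq_mul_inv_smul M hv, mul_comm]
  exact mul_le_mul_of_nonneg_left (sMin_le_vecEnorm_mulVec M (vecEnorm_inv_smul_self hv))
    (vecEnorm_nonneg v)

lemma sMax_mul_le (A : Matrix (Fin m) (Fin n) ℝ) (B : Matrix (Fin n) (Fin p) ℝ) :
    sMax (A * B) ≤ sMax A * sMax B := by
  refine Real.iSup_le (fun x => ?_) (mul_nonneg (sMax_nonneg A) (sMax_nonneg B))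
  calc vecEnorm ((A * B) *ᵥ x.1) = vecEnorm (A *ᵥ B *ᵥ x.1) := by rw [mulVec_mulVec]
    _ ≤ sMax A * (sMax B * vecEnorm x.1) := by
      grw [vecEnorm_mulVec_le_sMax_mul A, vecEnorm_mulVec_le_sMax_mul B]
      exact sMax_nonneg A
    _ = sMax A * sMax B := by rw [x.2, mul_one]

lemma sMin_pos_of_mul_eq_one (hn : 0 < n) {M : Matrix (Fin m) (Fin n) ℝ}
    {L : Matrix (Fin n) (Fin m) ℝ} (hL : L * M = 1) : 0 < sMin M := by
  have hbound : ∀ x : {x : Fin n → ℝ // vecEnorm x = 1}, 1 ≤ sMax L * vecEnorm (M *ᵥ x.1) := by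
    intro x
    calc 1 = vecEnorm (L *ᵥ M *ᵥ x.1) := by rw [mulVec_mulVec, hL, one_mulVec, x.2]
      _ ≤ sMax L * vecEnorm (M *ᵥ x.1) := vecEnorm_mulVec_le_sMax_mul L _
  have := nonempty_unitVec_iff.2 hn
  have hL_pos : 0 < sMax L := by
    obtain ⟨x⟩ := ‹Nonempty {x : Fin n → ℝ // vecEnorm x = 1}›
    exact pos_of_mul_pos_left (one_pos.trans_le (hbound x)) (vecEnorm_nonneg _)
  refine (inv_pos.2 hL_pos).trans_le (le_ciInf fun x => ?_)
  rw [inv_le_iff_one_le_mul₀' hL_pos]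
  exact hbound x

lemma sMin_mul_vecEnorm_mulVec_le (M : Matrix (Fin m) (Fin n) ℝ) (w : Fin n → ℝ) :
    sMin M * vecEnorm (M *ᵥ w) ≤ vecEnorm ((Mᵀ * M) *ᵥ w) := by
  rcases eq_or_ne w 0 with rfl | hw
  · simp
  refine le_of_mul_le_mul_left ?_ (vecEnorm_pos hw)
  calc vecEnorm w * (sMin M * vecEnorm (M *ᵥ w))
        = sMin M * vecEnorm w * vecEnorm (M *ᵥ w) := by ring
    _ ≤ vecEnorm (M *ᵥ w) * vecEnorm (M *ᵥ w) :=
      mul_le_mul_of_nonneg_right (sMin_mul_vecEnorm_le M w) (vecEnorm_nonneg _)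
    _ = w ⬝ᵥ ((Mᵀ * M) *ᵥ w) := by
      rw [← sq, ← dotProduct_self_eq_vecEnorm_sq, ← mulVec_mulVec, dotProduct_mulVec w Mᵀ,
        vecMul_transpose]
    _ ≤ vecEnorm w * vecEnorm ((Mᵀ * M) *ᵥ w) := dotProduct_le_vecEnorm_mul _ _

lemma sMin_transpose_mul_sMin_projection_le {A : Matrix (Fin m) (Fin n) ℝ}
    (hA : IsUnit (A * Aᵀ).det) (B : Matrix (Fin n) (Fin p) ℝ)
    [Nonempty {x : Fin p → ℝ // vecEnorm x = 1}] :
    sMin Aᵀ * sMin (Aᵀ * (A * Aᵀ)⁻¹ * A * B) ≤ sMin (A * B) := by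
  refine le_ciInf fun x => ?_
  set w := ((A * Aᵀ)⁻¹ * A * B) *ᵥ x.1
  calc sMin Aᵀ * sMin (Aᵀ * (A * Aᵀ)⁻¹ * A * B)
        ≤ sMin Aᵀ * vecEnorm ((Aᵀ * (A * Aᵀ)⁻¹ * A * B) *ᵥ x.1) :=
      mul_le_mul_of_nonneg_left (sMin_le_vecEnorm_mulVec _ x.2) (sMin_nonneg _)
    _ = sMin Aᵀ * vecEnorm (Aᵀ *ᵥ w) := by simp only [w, mulVec_mulVec, Matrix.mul_assoc]
    _ ≤ vecEnorm ((Aᵀᵀ * Aᵀ) *ᵥ w) := sMin_mul_vecEnorm_mulVec_le Aᵀ w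
    _ = vecEnorm ((A * B) *ᵥ x.1) := by
      rw [transpose_transpose, mulVec_mulVec]
      simp only [← Matrix.mul_assoc, mul_nonsing_inv _ hA, Matrix.one_mul]

end singularValues

theorem stmt_3_general {r r' N : ℕ} (hr : r ≤ r')
    (A : Matrix (Fin r') (Fin N) ℝ) (B : Matrix (Fin N) (Fin r) ℝ)
    (hInv : IsUnit (A * Aᵀ).det)
    (hP : 0 < sMin (Aᵀ * (A * Aᵀ)⁻¹ * A * B)) :
    sMax (A * B) / sMin (A * B) ≤
      (sMax A / sMin Aᵀ) * (sMax B / sMin (Aᵀ * (A * Aᵀ)⁻¹ * A * B)) := by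
  have hr_pos : 0 < r := pos_of_sMin_pos hP
  have := nonempty_unitVec_iff.2 hr_pos
  have hAt : 0 < sMin Aᵀ := by
    refine sMin_pos_of_mul_eq_one (hr_pos.trans_le hr) (L := (A * Aᵀ)⁻¹ * A) ?_
    rw [Matrix.mul_assoc, nonsing_inv_mul _ hInv]
  rw [div_mul_div_comm]
  exact div_le_div₀ (mul_nonneg (sMax_nonneg A) (sMax_nonneg B)) (sMax_mul_le A B)
    (mul_pos hAt hP) (sMin_transpose_mul_sMin_projection_le hInv B)

theorem stmt_3 {r r' N : ℕ} (hr : r ≤ r') (hr' : r' ≤ N)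
    (A : Matrix (Fin r') (Fin N) ℝ) (B : Matrix (Fin N) (Fin r) ℝ)
    (hArank : A.rank = r') (hBrank : B.rank = r)
    (hInv : IsUnit (A * Aᵀ).det)
    (hP : 0 < sMin (Aᵀ * (A * Aᵀ)⁻¹ * A * B)) :
    sMax (A * B) / sMin (A * B) ≤
      (sMax A / sMin Aᵀ) * (sMax B / sMin (Aᵀ * (A * Aᵀ)⁻¹ * A * B)) :=
  stmt_3_general hr A B hInv hP
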